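/- For μ ≠ 0, the rational function ω(z) = (1/2)(3/z - 2/(z+1)) does not satisfy the differential equation ω'' + 3ωω' + ω³ - 4rω - 2r' = 0, where r(z) = 3/(4(z+1)²) + 1/(64μ²z³) + (3μ-1)/(4μ(z+1)) + (3-4μ-6μ²)/(32μ²z²) + (1+16μ-48μ²)/(64μ²z); indeed, substituting ω yields (after clearing denominators) the polynomial z² - 1 + (2 - 8z + 2z²)μ, which is not identically zero. -/

import Mathlib

/-- r(z), the reduced invariant of the Kovacic algorithm. -/
noncomputable def rCoeff (μ : ℂ) : ℂ → ℂ := fun z =>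
  3 / (4 * (z + 1) ^ 2) + 1 / (64 * μ ^ 2 * z ^ 3)
    + (3 * μ - 1) / (4 * μ * (z + 1))
    + (3 - 4 * μ - 6 * μ ^ 2) / (32 * μ ^ 2 * z ^ 2)
    + (1 + 16 * μ - 48 * μ ^ 2) / (64 * μ ^ 2 * z)

/-- ω(z) = (1/2)(3/z - 2/(z+1)), the Kovacic candidate. -/
noncomputable def ωCoeff : ℂ → ℂ := fun z => (1/2) * (3 / z - 2 / (z + 1))

/-!
At every `z ∉ {0, -1}` the left-hand side of the equation equals
`(z² - 1 + (2 - 8z + 2z²)μ) / (8μ²z³(z + 1)²)`, and at `z = 1` the numerator is `-4μ ≠ 0`.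
-/

open Topology

lemma hasDerivAt_ωCoeff {z : ℂ} (hz : z ≠ 0) (hz1 : z + 1 ≠ 0) :
    HasDerivAt ωCoeff (-3 / (2 * z ^ 2) + 1 / (z + 1) ^ 2) z := by
  have h := (((hasDerivAt_const z (3 : ℂ)).fun_div (hasDerivAt_id' z) hz).fun_sub
    ((hasDerivAt_const z (2 : ℂ)).fun_div ((hasDerivAt_id' z).add_const 1) hz1)).const_mul
    (1 / 2 : ℂ)
  exact h.congr_deriv (by field_simp; ring)

lemma deriv_ωCoeff_eventuallyEq {z : ℂ} (hz : z ≠ 0) (hz1 : z + 1 ≠ 0) :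
    deriv ωCoeff =ᶠ[𝓝 z] fun w => -3 / (2 * w ^ 2) + 1 / (w + 1) ^ 2 := by
  have hz1' : z ≠ -1 := fun h => hz1 (by rw [h]; ring)
  filter_upwards [eventually_ne_nhds hz, eventually_ne_nhds hz1'] with w hw hw1
  exact (hasDerivAt_ωCoeff hw (fun h => hw1 (eq_neg_of_add_eq_zero_left h))).deriv

lemma deriv_deriv_ωCoeff {z : ℂ} (hz : z ≠ 0) (hz1 : z + 1 ≠ 0) :
    deriv (deriv ωCoeff) z = 3 / z ^ 3 - 2 / (z + 1) ^ 3 := by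
  rw [(deriv_ωCoeff_eventuallyEq hz hz1).deriv_eq]
  have h := ((hasDerivAt_const z (-3 : ℂ)).fun_div
      (((hasDerivAt_id' z).fun_pow 2).const_mul 2) (by simp [hz])).fun_add
    ((hasDerivAt_const z (1 : ℂ)).fun_div
      (((hasDerivAt_id' z).add_const 1).fun_pow 2) (pow_ne_zero 2 hz1))
  rw [h.deriv]
  field_simp
  ring

lemma hasDerivAt_rCoeff {μ z : ℂ} (hμ : μ ≠ 0) (hz : z ≠ 0) (hz1 : z + 1 ≠ 0) :
    HasDerivAt (rCoeff μ)
      (-3 / (2 * (z + 1) ^ 3) - 3 / (64 * μ ^ 2 * z ^ 4) - (3 * μ - 1) / (4 * μ * (z + 1) ^ 2)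
        - (3 - 4 * μ - 6 * μ ^ 2) / (16 * μ ^ 2 * z ^ 3)
        - (1 + 16 * μ - 48 * μ ^ 2) / (64 * μ ^ 2 * z ^ 2)) z := by
  have h := (((((hasDerivAt_const z (3 : ℂ)).fun_div
      ((((hasDerivAt_id' z).add_const 1).fun_pow 2).const_mul 4) (by simp [hz1])).fun_add
    ((hasDerivAt_const z (1 : ℂ)).fun_div (((hasDerivAt_id' z).fun_pow 3).const_mul (64 * μ ^ 2))
      (by simp [hμ, hz]))).fun_add
    ((hasDerivAt_const z (3 * μ - 1)).fun_div (((hasDerivAt_id' z).add_const 1).const_mul (4 * μ))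
      (by simp [hμ, hz1]))).fun_add
    ((hasDerivAt_const z (3 - 4 * μ - 6 * μ ^ 2)).fun_div
      (((hasDerivAt_id' z).fun_pow 2).const_mul (32 * μ ^ 2)) (by simp [hμ, hz]))).fun_add
    ((hasDerivAt_const z (1 + 16 * μ - 48 * μ ^ 2)).fun_div
      ((hasDerivAt_id' z).const_mul (64 * μ ^ 2)) (by simp [hμ, hz]))
  exact h.congr_deriv (by field_simp; ring)

lemma kovacic_residual_eq_div {μ z : ℂ} (hμ : μ ≠ 0) (hz : z ≠ 0) (hz1 : z + 1 ≠ 0) :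
    deriv (deriv ωCoeff) z + 3 * ωCoeff z * deriv ωCoeff z + ωCoeff z ^ 3
        - 4 * rCoeff μ z * ωCoeff z - 2 * deriv (rCoeff μ) z
      = (z ^ 2 - 1 + (2 - 8 * z + 2 * z ^ 2) * μ) / (8 * μ ^ 2 * z ^ 3 * (z + 1) ^ 2) := by
  rw [deriv_deriv_ωCoeff hz hz1, (hasDerivAt_ωCoeff hz hz1).deriv,
    (hasDerivAt_rCoeff hμ hz hz1).deriv, rCoeff, ωCoeff]
  field_simp
  ring

/-- Key step of Kovacic's algorithm: for μ ≠ 0 the candidate ω does not satisfy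
ω'' + 3ωω' + ω³ - 4rω - 2r' = 0; indeed, the obstruction polynomial
z² - 1 + (2 - 8z + 2z²)μ is not identically zero. -/
theorem Kovacic_obstruction (μ : ℂ) (hμ : μ ≠ 0) :
    (¬ ∀ z : ℂ, z ≠ 0 → z + 1 ≠ 0 →
      deriv (deriv ωCoeff) z + 3 * ωCoeff z * deriv ωCoeff z + ωCoeff z ^ 3
        - 4 * rCoeff μ z * ωCoeff z - 2 * deriv (rCoeff μ) z = 0) ∧
    ¬ ∀ z : ℂ, z ^ 2 - 1 + (2 - 8 * z + 2 * z ^ 2) * μ = 0 := by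
  have hP : (1 : ℂ) ^ 2 - 1 + (2 - 8 * 1 + 2 * 1 ^ 2) * μ ≠ 0 := by
    norm_num [hμ]
  refine ⟨fun h => hP ?_, fun h => hP (h 1)⟩
  have h1 := h 1 one_ne_zero (by norm_num)
  rw [kovacic_residual_eq_div hμ one_ne_zero (by norm_num)] at h1
  simpa [hμ] using h1
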